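/- Let K ⊆ ℝⁿ be a nonempty closed set, f = (f_1,…,f_q) a vector polynomial, x̄ ∈ K, and set S = K_x̄. Assume that: (a) SOL^w(S_∞, f^∞) is unbounded; and (b) for every v ∈ SOL^w(S_∞, f^∞) with v ≠ 0 there exists t > 0 such that for every x ∈ S one has x − tv ∈ K and f_i(x − tv) ≤ f_i(x) for all i = 1,…,q. Then SOL^s(K, f) ≠ ∅. -/

import Mathlib

open Filter Topology MvPolynomial Bornology

noncomputable section

/-- The asymptotic (recession) cone of a set `A ⊆ ℝⁿ`. -/
def asymCone {n : ℕ} (A : Set (Fin n → ℝ)) : Set (Fin n → ℝ) :=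
  {v | ∃ (t : ℕ → ℝ) (x : ℕ → (Fin n → ℝ)),
    Filter.Tendsto t Filter.atTop Filter.atTop ∧ (∀ k, x k ∈ A) ∧
    Filter.Tendsto (fun k => (t k)⁻¹ • x k) Filter.atTop (nhds v)}

/-- Pareto efficient solutions of the vector map `g` on `C`. -/
def SOLs {n q : ℕ} (C : Set (Fin n → ℝ)) (g : Fin q → (Fin n → ℝ) → ℝ) :
    Set (Fin n → ℝ) :=
  {x | x ∈ C ∧ ¬ ∃ y ∈ C, (∀ i, g i y ≤ g i x) ∧ (∃ i, g i y ≠ g i x)}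

/-- Weak Pareto efficient solutions of the vector map `g` on `C`. -/
def SOLw {n q : ℕ} (C : Set (Fin n → ℝ)) (g : Fin q → (Fin n → ℝ) → ℝ) :
    Set (Fin n → ℝ) :=
  {x | x ∈ C ∧ ¬ ∃ y ∈ C, ∀ i, g i y < g i x}

/-- Global minimizers of a scalar function `p` on `C`. -/
def SOLmin {n : ℕ} (C : Set (Fin n → ℝ)) (p : (Fin n → ℝ) → ℝ) :
    Set (Fin n → ℝ) :=
  {x | x ∈ C ∧ ∀ y ∈ C, p x ≤ p y}

/-- The recession polynomial (leading term: top-degree homogeneous part) of a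
polynomial, as a function on `ℝⁿ`. -/
noncomputable def recPoly {n : ℕ} (p : MvPolynomial (Fin n) ℝ) : (Fin n → ℝ) → ℝ :=
  fun x => MvPolynomial.eval x (MvPolynomial.homogeneousComponent p.totalDegree p)

/-!
Scalarize: a minimizer of `∑ i, f i` over `S = K_x̄` is Pareto efficient on `K`. Minimize
`∑ i, f i` over the compact truncations `S ∩ {x ⬝ᵥ x ≤ R_k}`, breaking ties by least `x ⬝ᵥ x`.
If these minimizers have a bounded subsequence, its limit minimizes `∑ i, f i` on all of `S`.
Otherwise their directions accumulate at some `v ≠ 0` of `S_∞`. Each `(f i)^∞` is `≤ 0` on `S_∞`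
and positively homogeneous of degree `≥ 1`, so as soon as `SOL^w(S_∞, f^∞)` is nonempty it
contains all of `S_∞`, in particular `v`. Far out in direction `v`, the step `x ↦ x - t • v`
of (b) lowers `x ⬝ᵥ x` without raising any `f i`, contradicting the tie-breaking.
-/

namespace MvPolynomial

variable {σ R : Type*}

lemma IsHomogeneous.eval_smul [CommSemiring R] {φ : MvPolynomial σ R} {d : ℕ}
    (hφ : φ.IsHomogeneous d) (c : R) (x : σ → R) : eval (c • x) φ = c ^ d * eval x φ := by
  rw [eval_eq, eval_eq, Finset.mul_sum]
  refine Finset.sum_congr rfl fun m hm => ?_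
  have hdeg : ∑ i ∈ m.support, m i = d := by
    simpa [Finsupp.weight_apply, Finsupp.sum] using hφ (mem_support_iff.mp hm)
  simp only [Pi.smul_apply, smul_eq_mul, mul_pow, Finset.prod_mul_distrib,
    Finset.prod_pow_eq_pow_sum, hdeg]
  ring

lemma eval_smul_div_pow_totalDegree [Field R] (p : MvPolynomial σ R) {c : R} (hc : c ≠ 0)
    (x : σ → R) :
    eval (c • x) p / c ^ p.totalDegree = ∑ d ∈ Finset.range (p.totalDegree + 1),
      c⁻¹ ^ (p.totalDegree - d) * eval x (homogeneousComponent d p) := by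
  rw [← congrArg (eval (c • x)) (sum_homogeneousComponent p), map_sum, Finset.sum_div]
  refine Finset.sum_congr rfl fun d hd => ?_
  rw [(homogeneousComponent_isHomogeneous d p).eval_smul, inv_pow,
    ← pow_sub_mul_pow c (Nat.lt_succ_iff.mp (Finset.mem_range.mp hd))]
  field_simp

end MvPolynomial

lemma recPoly_smul {n : ℕ} (p : MvPolynomial (Fin n) ℝ) (c : ℝ) (x : Fin n → ℝ) :
    recPoly p (c • x) = c ^ p.totalDegree * recPoly p x :=
  (homogeneousComponent_isHomogeneous _ p).eval_smul c x

lemma tendsto_eval_div_pow_recPoly {n : ℕ} (p : MvPolynomial (Fin n) ℝ) {t : ℕ → ℝ}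
    {x : ℕ → Fin n → ℝ} {v : Fin n → ℝ} (ht : Tendsto t atTop atTop)
    (hx : Tendsto (fun k => (t k)⁻¹ • x k) atTop (𝓝 v)) :
    Tendsto (fun k => eval (x k) p / t k ^ p.totalDegree) atTop (𝓝 (recPoly p v)) := by
  set D := p.totalDegree
  -- `eval x p / t ^ D` is a polynomial in `(t⁻¹, t⁻¹ • x)` that is the leading form at `t⁻¹ = 0`
  let F : ℝ × (Fin n → ℝ) → ℝ := fun sy =>
    ∑ d ∈ Finset.range (D + 1), sy.1 ^ (D - d) * eval sy.2 (homogeneousComponent d p)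
  have hF : Continuous F := continuous_finsetSum _ fun d _ =>
    (continuous_fst.pow _).mul ((continuous_eval _).comp continuous_snd)
  have hF0 : F (0, v) = recPoly p v := by
    simp only [F]
    rw [Finset.sum_eq_single D]
    · simp [recPoly, D]
    · intro d hd hdD
      have : D - d ≠ 0 := by have := Finset.mem_range.mp hd; omega
      simp [this]
    · simp
  rw [← hF0]
  refine ((hF.tendsto _).comp (ht.inv_tendsto_atTop.prodMk_nhds hx)).congr' ?_
  filter_upwards [ht.eventually_gt_atTop 0] with k hk
  have h := eval_smul_div_pow_totalDegree p hk.ne' ((t k)⁻¹ • x k)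
  rw [smul_inv_smul₀ hk.ne'] at h
  exact h.symm

lemma recPoly_nonpos_of_mem_asymCone {n : ℕ} {p : MvPolynomial (Fin n) ℝ}
    (hp : 1 ≤ p.totalDegree) {S : Set (Fin n → ℝ)} {c : ℝ} (hS : ∀ y ∈ S, eval y p ≤ c)
    {v : Fin n → ℝ} (hv : v ∈ asymCone S) : recPoly p v ≤ 0 := by
  obtain ⟨t, x, ht, hxS, hx⟩ := hv
  have htD : Tendsto (fun k => t k ^ p.totalDegree) atTop atTop :=
    (tendsto_pow_atTop (by omega)).comp ht
  refine le_of_tendsto_of_tendsto (tendsto_eval_div_pow_recPoly p ht hx)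
    (by simpa using htD.inv_tendsto_atTop.const_mul c) ?_
  filter_upwards [htD.eventually_gt_atTop 0] with k hk
  rw [← div_eq_mul_inv]
  exact div_le_div_of_nonneg_right (hS _ (hxS k)) hk.le

lemma smul_mem_asymCone {n : ℕ} {A : Set (Fin n → ℝ)} {w : Fin n → ℝ}
    (hw : w ∈ asymCone A) {c : ℝ} (hc : 0 < c) : c • w ∈ asymCone A := by
  obtain ⟨t, x, ht, hxA, hx⟩ := hw
  refine ⟨fun k => t k / c, x, ht.atTop_div_const hc, hxA, ?_⟩
  simpa [inv_div, div_eq_mul_inv, smul_smul] using hx.const_smul c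

lemma SOLw_recPoly_eq_empty_of_forall_neg {n q : ℕ} {A : Set (Fin n → ℝ)}
    {f : Fin q → MvPolynomial (Fin n) ℝ} (hdeg : ∀ i, 1 ≤ (f i).totalDegree) {w : Fin n → ℝ}
    (hw : w ∈ asymCone A) (hneg : ∀ i, recPoly (f i) w < 0) :
    SOLw (asymCone A) (fun i => recPoly (f i)) = ∅ := by
  refine Set.eq_empty_of_forall_notMem fun z hz => hz.2 ?_
  have hlim : ∀ i, Tendsto (fun c : ℝ => recPoly (f i) (c • w)) atTop atBot := fun i => by
    simp only [recPoly_smul]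
    exact (tendsto_pow_atTop (by have := hdeg i; omega)).atTop_mul_const_of_neg (hneg i)
  obtain ⟨c, hcz, hc⟩ := ((eventually_all.2 fun i =>
    (hlim i).eventually (eventually_lt_atBot (recPoly (f i) z))).and
      (eventually_gt_atTop 0)).exists
  exact ⟨c • w, smul_mem_asymCone hw hc, hcz⟩

lemma asymCone_subset_SOLw_recPoly {n q : ℕ} {S : Set (Fin n → ℝ)}
    {f : Fin q → MvPolynomial (Fin n) ℝ} (hdeg : ∀ i, 1 ≤ (f i).totalDegree) {c : Fin q → ℝ}
    (hS : ∀ y ∈ S, ∀ i, eval y (f i) ≤ c i)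
    (hne : (SOLw (asymCone S) fun i => recPoly (f i)).Nonempty) :
    asymCone S ⊆ SOLw (asymCone S) fun i => recPoly (f i) := by
  refine fun v hv => ⟨hv, fun ⟨w, hw, hwv⟩ => ?_⟩
  have hneg : ∀ i, recPoly (f i) w < 0 := fun i =>
    (hwv i).trans_le (recPoly_nonpos_of_mem_asymCone (hdeg i) (fun y hy => hS y hy i) hv)
  simp [SOLw_recPoly_eq_empty_of_forall_neg hdeg hw hneg] at hne

lemma mem_SOLs_of_isMinOn_sum {n q : ℕ} {K : Set (Fin n → ℝ)} {g : Fin q → (Fin n → ℝ) → ℝ}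
    {z : Fin n → ℝ} (hz : z ∈ K)
    (hmin : IsMinOn (fun x => ∑ i, g i x) {x ∈ K | ∀ i, g i x ≤ g i z} z) : z ∈ SOLs K g := by
  refine ⟨hz, fun ⟨y, hyK, hyz, i, hne⟩ => (isMinOn_iff.mp hmin y ⟨hyK, hyz⟩).not_gt ?_⟩
  exact Finset.sum_lt_sum (fun i _ => hyz i) ⟨i, Finset.mem_univ _, (hyz i).lt_of_ne hne⟩

lemma IsClosed.sep_forall_le {E ι : Type*} [TopologicalSpace E] {K : Set E} (hK : IsClosed K)
    {g : ι → E → ℝ} (hg : ∀ i, Continuous (g i)) (c : ι → ℝ) :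
    IsClosed {x ∈ K | ∀ i, g i x ≤ c i} := by
  have h : IsClosed {x | ∀ i, g i x ≤ c i} := by
    simpa only [Set.iInter_ofPred] using
      isClosed_iInter fun i => _root_.isClosed_le (hg i) continuous_const
  exact hK.inter h

lemma IsCompact.exists_isMinOn_isMinOn {E β γ : Type*} [TopologicalSpace E] [LinearOrder β]
    [TopologicalSpace β] [OrderClosedTopology β] [LinearOrder γ] [TopologicalSpace γ]
    [OrderClosedTopology γ] {C : Set E} (hC : IsCompact C) (hne : C.Nonempty) {p : E → β}
    {g : E → γ} (hp : Continuous p) (hg : Continuous g) :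
    ∃ z ∈ C, IsMinOn p C z ∧ IsMinOn g {y ∈ C | p y ≤ p z} z := by
  obtain ⟨m, hmC, hm⟩ := hC.exists_isMinOn hne hp.continuousOn
  obtain ⟨z, ⟨hzC, hzm⟩, hz⟩ := (hC.inter_right (isClosed_le hp continuous_const)).exists_isMinOn
    ⟨m, hmC, le_rfl⟩ hg.continuousOn
  exact ⟨z, hzC, fun y hy => hzm.trans (hm hy), fun y hy => hz ⟨hy.1, hy.2.trans hzm⟩⟩

lemma isMinOn_of_tendsto_subseq {E β : Type*} [TopologicalSpace E] [LinearOrder β]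
    [TopologicalSpace β] [OrderClosedTopology β] {p : E → β} (hp : Continuous p) {S : Set E}
    {C : ℕ → Set E} (hC : ∀ y ∈ S, ∀ᶠ k in atTop, y ∈ C k) {z : ℕ → E}
    (hz : ∀ k, IsMinOn p (C k) (z k)) {φ : ℕ → ℕ} (hφ : Tendsto φ atTop atTop) {a : E}
    (ha : Tendsto (z ∘ φ) atTop (𝓝 a)) : IsMinOn p S a := fun y hy =>
  le_of_tendsto ((hp.tendsto a).comp ha) ((hφ.eventually (hC y hy)).mono fun j hj => hz (φ j) hj)

lemma isCompact_setOf_dotProduct_self_le {ι : Type*} [Fintype ι] (R : ℝ) :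
    IsCompact {x : ι → ℝ | x ⬝ᵥ x ≤ R} := by
  refine (isCompact_closedBall (0 : ι → ℝ) √R).of_isClosed_subset
    (isClosed_le (continuous_id.dotProduct continuous_id) continuous_const) fun x hx => ?_
  rw [mem_closedBall_zero_iff, pi_norm_le_iff_of_nonneg (Real.sqrt_nonneg _)]
  refine fun j => Real.abs_le_sqrt ?_
  calc x j ^ 2 = x j * x j := sq _
    _ ≤ x ⬝ᵥ x := Finset.single_le_sum (fun j _ => mul_self_nonneg (x j)) (Finset.mem_univ j)
    _ ≤ R := hx

lemma dotProduct_self_sub_smul_lt {ι : Type*} [Fintype ι] {a v : ι → ℝ} {t : ℝ} (ht : 0 < t)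
    (h : t * (v ⬝ᵥ v) < 2 * (a ⬝ᵥ v)) : (a - t • v) ⬝ᵥ (a - t • v) < a ⬝ᵥ a := by
  have hexp : (a - t • v) ⬝ᵥ (a - t • v) = a ⬝ᵥ a - t * (2 * (a ⬝ᵥ v) - t * (v ⬝ᵥ v)) := by
    simp only [sub_dotProduct, dotProduct_sub, smul_dotProduct, dotProduct_smul, smul_eq_mul,
      dotProduct_comm v a]
    ring
  rw [hexp]
  linarith [mul_pos ht (sub_pos.2 h)]

lemma two_mul_dotProduct_le_of_isMinOn {ι β : Type*} [Fintype ι] [Preorder β]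
    {S : Set (ι → ℝ)} {p : (ι → ℝ) → β} {R t : ℝ} {z v : ι → ℝ} (ht : 0 < t)
    (hz : z ∈ {x ∈ S | x ⬝ᵥ x ≤ R})
    (hmin : IsMinOn (fun x => x ⬝ᵥ x) {y ∈ {x ∈ S | x ⬝ᵥ x ≤ R} | p y ≤ p z} z)
    (hyS : z - t • v ∈ S) (hpy : p (z - t • v) ≤ p z) : 2 * (z ⬝ᵥ v) ≤ t * (v ⬝ᵥ v) := by
  by_contra! h
  have hlt := dotProduct_self_sub_smul_lt ht h
  exact hlt.not_ge (isMinOn_iff.mp hmin _ ⟨⟨hyS, hlt.le.trans hz.2⟩, hpy⟩)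

lemma exists_mem_asymCone_not_bddAbove_dotProduct {n : ℕ} {S : Set (Fin n → ℝ)}
    {x : ℕ → Fin n → ℝ} (hxS : ∀ k, x k ∈ S) (hx : Tendsto (fun k => ‖x k‖) atTop atTop) :
    ∃ v ∈ asymCone S, v ≠ 0 ∧ ¬ BddAbove (Set.range fun k => x k ⬝ᵥ v) := by
  have hfreq : ∃ᶠ k in atTop, ‖x k‖⁻¹ • x k ∈ Metric.sphere (0 : Fin n → ℝ) 1 :=
    (hx.eventually_gt_atTop 0).frequently.mono fun k hk => by simp [norm_smul, hk.ne']
  obtain ⟨v, hv, φ, hφ, hφv⟩ := (isCompact_sphere 0 1).tendsto_subseq' hfreq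
  have hv0 : v ≠ 0 := Metric.ne_of_mem_sphere hv one_ne_zero
  have hxφ : Tendsto (fun j => ‖x (φ j)‖) atTop atTop := hx.comp hφ.tendsto_atTop
  refine ⟨v, ⟨_, _, hxφ, fun j => hxS _, hφv⟩, hv0, fun hbdd => ?_⟩
  have hvv : 0 < v ⬝ᵥ v := lt_of_le_of_ne (Finset.sum_nonneg fun i _ => mul_self_nonneg _)
    (Ne.symm (dotProduct_self_eq_zero.not.2 hv0))
  have hlim : Tendsto (fun j => ‖x (φ j)‖ * ((‖x (φ j)‖⁻¹ • x (φ j)) ⬝ᵥ v)) atTop atTop :=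
    hxφ.atTop_mul_pos hvv (((continuous_id.dotProduct continuous_const).tendsto v).comp hφv)
  refine not_bddAbove_of_tendsto_atTop (f := fun j => x (φ j) ⬝ᵥ v) (hlim.congr' ?_)
    (hbdd.mono (Set.range_comp_subset_range φ fun k => x k ⬝ᵥ v))
  filter_upwards [hxφ.eventually_gt_atTop 0] with j hj
  rw [smul_dotProduct, smul_eq_mul, mul_inv_cancel_left₀ hj.ne']

theorem stmt18_general {n q : ℕ} (K : Set (Fin n → ℝ)) (hKcl : IsClosed K)
    (f : Fin q → MvPolynomial (Fin n) ℝ) (hdeg : ∀ i, 1 ≤ (f i).totalDegree)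
    (xbar : Fin n → ℝ) (hx : xbar ∈ K)
    (ha : ¬ Bornology.IsBounded
      (SOLw (asymCone {x ∈ K | ∀ j, eval x (f j) ≤ eval xbar (f j)})
        (fun i => recPoly (f i))))
    (hb : ∀ v ∈ SOLw (asymCone {x ∈ K | ∀ j, eval x (f j) ≤ eval xbar (f j)})
        (fun i => recPoly (f i)), v ≠ 0 →
      ∃ t : ℝ, 0 < t ∧ ∀ x ∈ {x ∈ K | ∀ j, eval x (f j) ≤ eval xbar (f j)},
        x - t • v ∈ K ∧ ∀ i, eval (x - t • v) (f i) ≤ eval x (f i)) :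
    (SOLs K (fun i x => eval x (f i))).Nonempty := by
  set S := {x ∈ K | ∀ j, eval x (f j) ≤ eval xbar (f j)}
  have hScl : IsClosed S := hKcl.sep_forall_le (fun j => continuous_eval (f j)) _
  set p : (Fin n → ℝ) → ℝ := fun x => ∑ i, eval x (f i)
  have hpc : Continuous p := continuous_finsetSum _ fun i _ => continuous_eval (f i)
  set C : ℕ → Set (Fin n → ℝ) := fun k => {x ∈ S | x ⬝ᵥ x ≤ xbar ⬝ᵥ xbar + k}
  have hCne : ∀ k : ℕ, (C k).Nonempty := fun k => ⟨xbar, ⟨hx, fun j => le_rfl⟩, by simp⟩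
  have hCS : ∀ y ∈ S, ∀ᶠ k in atTop, y ∈ C k := fun y hy =>
    ((tendsto_atTop_add_const_left _ _ tendsto_natCast_atTop_atTop).eventually_ge_atTop
      (y ⬝ᵥ y)).mono fun k hk => ⟨hy, hk⟩
  choose z hzC hzp hzg using fun k => ((isCompact_setOf_dotProduct_self_le _).inter_left
    hScl).exists_isMinOn_isMinOn (hCne k) hpc (continuous_id.dotProduct continuous_id)
  obtain ⟨r, hr⟩ : ∃ r, ∃ᶠ k in atTop, z k ∈ Metric.ball 0 r := by
    by_contra! hfar
    obtain ⟨v, hvS, hv0, hvunb⟩ := exists_mem_asymCone_not_bddAbove_dotProduct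
      (fun k => (hzC k).1) (tendsto_atTop.2 fun r => (hfar r).mono fun k hk => by simpa using hk)
    obtain ⟨t, ht, hdesc⟩ := hb v (asymCone_subset_SOLw_recPoly hdeg (fun y hy => hy.2)
      (nonempty_of_not_isBounded ha) hvS) hv0
    obtain ⟨_, ⟨k, rfl⟩, hk⟩ := not_bddAbove_iff.1 hvunb (t * (v ⬝ᵥ v) / 2)
    obtain ⟨hyK, hyf⟩ := hdesc (z k) (hzC k).1
    have := two_mul_dotProduct_le_of_isMinOn ht (hzC k) (hzg k)
      ⟨hyK, fun j => (hyf j).trans ((hzC k).1.2 j)⟩ (Finset.sum_le_sum fun i _ => hyf i)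
    linarith
  obtain ⟨a, -, φ, hφ, hza⟩ := tendsto_subseq_of_frequently_bounded Metric.isBounded_ball hr
  have haS : a ∈ S := hScl.mem_of_tendsto hza (Eventually.of_forall fun j => (hzC _).1)
  have hmin : IsMinOn p S a := isMinOn_of_tendsto_subseq hpc hCS hzp hφ.tendsto_atTop hza
  exact ⟨a, mem_SOLs_of_isMinOn_sum haS.1
    (hmin.on_subset fun y hy => ⟨hy.1, fun j => (hy.2 j).trans (haS.2 j)⟩)⟩

theorem stmt18 {n q : ℕ} (K : Set (Fin n → ℝ)) (hKne : K.Nonempty) (hKcl : IsClosed K)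
    (f : Fin q → MvPolynomial (Fin n) ℝ) (hdeg : ∀ i, 1 ≤ (f i).totalDegree)
    (xbar : Fin n → ℝ) (hx : xbar ∈ K)
    (ha : ¬ Bornology.IsBounded
      (SOLw (asymCone {x ∈ K | ∀ j, eval x (f j) ≤ eval xbar (f j)})
        (fun i => recPoly (f i))))
    (hb : ∀ v ∈ SOLw (asymCone {x ∈ K | ∀ j, eval x (f j) ≤ eval xbar (f j)})
        (fun i => recPoly (f i)), v ≠ 0 →
      ∃ t : ℝ, 0 < t ∧ ∀ x ∈ {x ∈ K | ∀ j, eval x (f j) ≤ eval xbar (f j)},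
        x - t • v ∈ K ∧ ∀ i, eval (x - t • v) (f i) ≤ eval x (f i)) :
    (SOLs K (fun i x => eval x (f i))).Nonempty :=
  stmt18_general K hKcl f hdeg xbar hx ha hb
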